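/- arXiv:1102.4327 — 6 statements merged into one kernel-verified Lean document; each statement's English description precedes it below -/
import Mathlib

section
/- Let n ≥ 1 and let Iₙ ⊆ ℤ[X,Y] be the ideal generated by X^{n+1} and Rₙ = ∑_{i=0}^{n} (-1)^{i} X^{n-i} Y^{i}. Then for all natural numbers a, b with a + b ≥ 2n, the monomial X^{a} Y^{b} belongs to Iₙ. -/
/-!
Since `(X + Y) * Rₙ = X^{n+1} - (-Y)^{n+1}`, the ideal `Iₙ` contains `Y^{n+1}` as well as `X^{n+1}`.
Writing `Rₙ = X^n + Y * t` gives `X^n Y^n = Y^n Rₙ - Y^{n+1} t ∈ Iₙ`. A monomial `X^a Y^b` with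
`a + b ≥ 2n` has `a > n`, `b > n` or `a = b = n`, so it is a multiple of one of these three.
-/

open MvPolynomial Finset

namespace Ideal

variable {R : Type*} [CommRing R] (I : Ideal R)

theorem pow_mul_pow_mem_of_two_mul_le_add {x y : R} {n a b : ℕ} (hx : x ^ (n + 1) ∈ I)
    (hy : y ^ (n + 1) ∈ I) (hxy : x ^ n * y ^ n ∈ I) (hab : 2 * n ≤ a + b) :
    x ^ a * y ^ b ∈ I := by
  rcases lt_or_ge n a with ha | ha
  · exact I.mul_mem_right _ (I.pow_mem_of_pow_mem hx ha)
  rcases lt_or_ge n b with hb | hb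
  · exact I.mul_mem_left _ (I.pow_mem_of_pow_mem hy hb)
  obtain ⟨rfl, rfl⟩ : a = n ∧ b = n := by omega
  exact hxy

end Ideal

section AltSum

variable {R : Type*} [CommRing R]

/-- The polynomial `Rₙ` of the statement, evaluated at `x` and `y`. -/
def altSum (x y : R) (n : ℕ) : R :=
  ∑ i ∈ range (n + 1), (-1) ^ i * x ^ (n - i) * y ^ i

-- The exponent `n + 1 - 1 - i` is the shape in which `geom_sum₂_mul` is stated.
theorem altSum_eq_geom_sum₂ (x y : R) (n : ℕ) :
    altSum x y n = ∑ i ∈ range (n + 1), (-y) ^ i * x ^ (n + 1 - 1 - i) := by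
  refine sum_congr rfl fun i _ => ?_
  rw [neg_pow, Nat.add_sub_cancel]
  ring

theorem altSum_mul_add (x y : R) (n : ℕ) :
    altSum x y n * (x + y) = x ^ (n + 1) - (-y) ^ (n + 1) := by
  rw [altSum_eq_geom_sum₂, ← neg_sub, ← geom_sum₂_mul]
  ring

theorem exists_altSum_eq_pow_add_mul (x y : R) (n : ℕ) :
    ∃ t, altSum x y n = x ^ n + y * t := by
  refine ⟨∑ i ∈ range n, (-1) ^ (i + 1) * x ^ (n - (i + 1)) * y ^ i, ?_⟩
  rw [altSum, sum_range_succ', mul_sum, add_comm]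
  simp only [pow_zero, one_mul, mul_one, Nat.sub_zero, pow_succ]
  congr 1
  exact sum_congr rfl fun i _ => by ring

variable (I : Ideal R) {x y : R} {n : ℕ}

theorem Ideal.pow_succ_mem_of_altSum_mem (hx : x ^ (n + 1) ∈ I) (hR : altSum x y n ∈ I) :
    y ^ (n + 1) ∈ I := by
  have hneg : (-y) ^ (n + 1) ∈ I := by
    rw [← sub_sub_cancel (x ^ (n + 1)) ((-y) ^ (n + 1)), ← altSum_mul_add]
    exact I.sub_mem hx (I.mul_mem_right _ hR)
  rw [← neg_neg y, neg_pow]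
  exact I.mul_mem_left _ hneg

theorem Ideal.pow_mul_pow_mem_of_altSum_mem (hy : y ^ (n + 1) ∈ I) (hR : altSum x y n ∈ I) :
    x ^ n * y ^ n ∈ I := by
  obtain ⟨t, ht⟩ := exists_altSum_eq_pow_add_mul x y n
  have : x ^ n * y ^ n = y ^ n * altSum x y n - y ^ (n + 1) * t := by
    rw [ht]
    ring
  rw [this]
  exact I.sub_mem (I.mul_mem_left _ hR) (I.mul_mem_right _ hy)

end AltSum

theorem stmt3_general (n : ℕ) (a b : ℕ) (hab : 2 * n ≤ a + b) :
    (X 0 : MvPolynomial (Fin 2) ℤ) ^ a * (X 1) ^ b ∈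
      Ideal.span
        ({(X 0) ^ (n + 1),
          ∑ i ∈ Finset.range (n + 1),
            ((-1 : MvPolynomial (Fin 2) ℤ) ^ i * (X 0) ^ (n - i) * (X 1) ^ i)} :
          Set (MvPolynomial (Fin 2) ℤ)) := by
  set I := Ideal.span ({(X 0) ^ (n + 1), altSum (X 0) (X 1) n} : Set (MvPolynomial (Fin 2) ℤ))
  have hx : (X 0 : MvPolynomial (Fin 2) ℤ) ^ (n + 1) ∈ I :=
    Ideal.subset_span (Set.mem_insert _ _)
  have hR : altSum (X 0 : MvPolynomial (Fin 2) ℤ) (X 1) n ∈ I :=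
    Ideal.subset_span (Set.mem_insert_of_mem _ rfl)
  have hy := I.pow_succ_mem_of_altSum_mem hx hR
  exact I.pow_mul_pow_mem_of_two_mul_le_add hx hy (I.pow_mul_pow_mem_of_altSum_mem hy hR) hab

/-- For n ≥ 1, with Iₙ ⊆ ℤ[X,Y] the ideal generated by X^{n+1} and
Rₙ = ∑_{i=0}^{n} (-1)^{i} X^{n-i} Y^{i}: every monomial X^{a} Y^{b} with
a + b ≥ 2n lies in Iₙ. -/
theorem stmt3 (n : ℕ) (hn : 1 ≤ n) (a b : ℕ) (hab : 2 * n ≤ a + b) :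
    (X 0 : MvPolynomial (Fin 2) ℤ) ^ a * (X 1) ^ b ∈
      Ideal.span
        ({(X 0) ^ (n + 1),
          ∑ i ∈ Finset.range (n + 1),
            ((-1 : MvPolynomial (Fin 2) ℤ) ^ i * (X 0) ^ (n - i) * (X 1) ^ i)} :
          Set (MvPolynomial (Fin 2) ℤ)) :=
  stmt3_general n a b hab
end

section
/- Let n ≥ 1 and let Iₙ ⊆ ℤ[X,Y] be the ideal generated by X^{n+1} and Rₙ = ∑_{i=0}^{n} (-1)^{i} X^{n-i} Y^{i}. Then for all natural numbers a, b with a + b = 2n − 1: if a = n or a = n−1, then X^{a} Y^{b} − X^{n-1} Y^{n} ∈ Iₙ, and otherwise X^{a} Y^{b} ∈ Iₙ. -/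
/-!
Write `r n x y = ∑_{i ≤ n} (-1)^i x^(n-i) y^i`. Since `r n x y * (x + y) = x^(n+1) ± y^(n+1)`,
the ideal `(x^(n+1), r n x y)` also contains `y^(n+1)`, which kills every monomial of degree
`2n - 1` with an exponent above `n`. Only `x^n y^(n-1)` and `x^(n-1) y^n` remain, and since
`r n x y ≡ x^n - x^(n-1) y` modulo `y^2`, their difference is `y^(n-1) r n x y` modulo `y^(n+1)`.
-/

open MvPolynomial Finset

section AltGeomSum

variable {R : Type*} [CommRing R]

def altGeomSum (n : ℕ) (x y : R) : R :=
  ∑ i ∈ range (n + 1), (-1) ^ i * x ^ (n - i) * y ^ i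

variable (x y : R)

@[simp]
theorem altGeomSum_zero : altGeomSum 0 x y = 1 := by
  simp [altGeomSum]

theorem altGeomSum_succ (n : ℕ) : altGeomSum (n + 1) x y = x ^ (n + 1) - y * altGeomSum n x y := by
  rw [altGeomSum, altGeomSum, sum_range_succ', mul_sum, sub_eq_add_neg, ← sum_neg_distrib,
    add_comm]
  congr 1
  · simp
  · refine sum_congr rfl fun i _ => ?_
    rw [Nat.add_sub_add_right]
    ring

theorem altGeomSum_mul_add (n : ℕ) :
    altGeomSum n x y * (x + y) = x ^ (n + 1) + (-1) ^ n * y ^ (n + 1) := by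
  induction n with
  | zero => simp
  | succ n ih =>
    rw [altGeomSum_succ]
    linear_combination (-y) * ih

theorem dvd_altGeomSum_sub_pow (n : ℕ) : y ∣ altGeomSum n x y - x ^ n := by
  cases n with
  | zero => simp
  | succ n => exact ⟨-altGeomSum n x y, by rw [altGeomSum_succ]; ring⟩

end AltGeomSum

section AltGeomSumIdeal

variable {R : Type*} [CommRing R] (n : ℕ) (x y : R)

theorem pow_succ_mem_span_altGeomSum :
    y ^ (n + 1) ∈ Ideal.span {x ^ (n + 1), altGeomSum n x y} := by
  have hsign : ((-1 : R) ^ n) ^ 2 = 1 := by rw [← pow_mul, pow_mul', neg_one_sq, one_pow]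
  refine Ideal.mem_span_pair.2 ⟨-(-1) ^ n, (-1) ^ n * (x + y), ?_⟩
  linear_combination (-1) ^ n * altGeomSum_mul_add x y n + y ^ (n + 1) * hsign

theorem pow_mul_pow_mem_span_altGeomSum {a b : ℕ} (h : n + 1 ≤ a ∨ n + 1 ≤ b) :
    x ^ a * y ^ b ∈ Ideal.span {x ^ (n + 1), altGeomSum n x y} := by
  rcases h with ha | hb
  · exact Ideal.mul_mem_right _ _ <|
      Ideal.pow_mem_of_pow_mem _ (Ideal.subset_span (Set.mem_insert _ _)) ha
  · exact Ideal.mul_mem_left _ _ <|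
      Ideal.pow_mem_of_pow_mem _ (pow_succ_mem_span_altGeomSum n x y) hb

theorem pow_mul_pow_sub_pow_mul_pow_mem_span_altGeomSum :
    x ^ n * y ^ (n - 1) - x ^ (n - 1) * y ^ n ∈ Ideal.span {x ^ (n + 1), altGeomSum n x y} := by
  cases n with
  | zero => simp
  | succ m =>
    obtain ⟨q, hq⟩ := dvd_altGeomSum_sub_pow x y m
    have hr : altGeomSum (m + 1) x y ∈ Ideal.span {x ^ (m + 1 + 1), altGeomSum (m + 1) x y} :=
      Ideal.subset_span (Set.mem_insert_of_mem _ rfl)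
    have hy := pow_succ_mem_span_altGeomSum (m + 1) x y
    have key : x ^ (m + 1) * y ^ m - x ^ m * y ^ (m + 1) =
        y ^ m * altGeomSum (m + 1) x y + q * y ^ (m + 1 + 1) := by
      rw [altGeomSum_succ]
      linear_combination y ^ (m + 1) * hq
    rw [Nat.add_sub_cancel, key]
    exact Ideal.add_mem _ (Ideal.mul_mem_left _ _ hr) (Ideal.mul_mem_left _ _ hy)

end AltGeomSumIdeal

theorem stmt4_general (n : ℕ) (a b : ℕ) (hab : a + b = 2 * n - 1) :
    ((a = n ∨ a = n - 1) →
      (X 0 : MvPolynomial (Fin 2) ℤ) ^ a * (X 1) ^ b -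
          (X 0) ^ (n - 1) * (X 1) ^ n ∈
        Ideal.span
          ({(X 0) ^ (n + 1),
            ∑ i ∈ Finset.range (n + 1),
              ((-1 : MvPolynomial (Fin 2) ℤ) ^ i * (X 0) ^ (n - i) * (X 1) ^ i)} :
            Set (MvPolynomial (Fin 2) ℤ))) ∧
    (¬(a = n ∨ a = n - 1) →
      (X 0 : MvPolynomial (Fin 2) ℤ) ^ a * (X 1) ^ b ∈
        Ideal.span
          ({(X 0) ^ (n + 1),
            ∑ i ∈ Finset.range (n + 1),
              ((-1 : MvPolynomial (Fin 2) ℤ) ^ i * (X 0) ^ (n - i) * (X 1) ^ i)} :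
            Set (MvPolynomial (Fin 2) ℤ))) := by
  refine ⟨?_, fun ha => ?_⟩
  · rintro (rfl | rfl)
    · obtain rfl : b = a - 1 := by omega
      exact pow_mul_pow_sub_pow_mul_pow_mem_span_altGeomSum a (X 0) (X 1)
    · obtain rfl : b = n := by omega
      rw [sub_self]
      exact Ideal.zero_mem _
  · exact pow_mul_pow_mem_span_altGeomSum n (X 0) (X 1) (by omega)

/-- For n ≥ 1, with Iₙ ⊆ ℤ[X,Y] the ideal generated by X^{n+1} and
Rₙ = ∑_{i=0}^{n} (-1)^{i} X^{n-i} Y^{i}: for a + b = 2n − 1,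
if a = n or a = n − 1 then X^{a} Y^{b} − X^{n-1} Y^{n} ∈ Iₙ, and otherwise
X^{a} Y^{b} ∈ Iₙ. -/
theorem stmt4 (n : ℕ) (hn : 1 ≤ n) (a b : ℕ) (hab : a + b = 2 * n - 1) :
    ((a = n ∨ a = n - 1) →
      (X 0 : MvPolynomial (Fin 2) ℤ) ^ a * (X 1) ^ b -
          (X 0) ^ (n - 1) * (X 1) ^ n ∈
        Ideal.span
          ({(X 0) ^ (n + 1),
            ∑ i ∈ Finset.range (n + 1),
              ((-1 : MvPolynomial (Fin 2) ℤ) ^ i * (X 0) ^ (n - i) * (X 1) ^ i)} :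
            Set (MvPolynomial (Fin 2) ℤ))) ∧
    (¬(a = n ∨ a = n - 1) →
      (X 0 : MvPolynomial (Fin 2) ℤ) ^ a * (X 1) ^ b ∈
        Ideal.span
          ({(X 0) ^ (n + 1),
            ∑ i ∈ Finset.range (n + 1),
              ((-1 : MvPolynomial (Fin 2) ℤ) ^ i * (X 0) ^ (n - i) * (X 1) ^ i)} :
            Set (MvPolynomial (Fin 2) ℤ))) :=
  stmt4_general n a b hab
end

section
/- Let n ≥ 1 and let Iₙ ⊆ ℤ[X,Y] be the ideal generated by X^{n+1} and Rₙ = ∑_{i=0}^{n} (-1)^{i} X^{n-i} Y^{i}. Then X^{n-1} Y^{n} ∉ Iₙ. -/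
/-!
Multiplication by `X + Y` turns `Rₙ` into `X ^ (n + 1) + (-1) ^ n * Y ^ (n + 1)`, so it maps `Iₙ`
into the monomial ideal `(X ^ (n + 1), Y ^ (n + 1))`. Modulo that ideal,
`(X + Y) * X ^ (n - 1) * Y ^ n ≡ X ^ n * Y ^ n`, which is divisible by neither generator.
-/

open MvPolynomial Finset

section CommRing

variable {R : Type*} [CommRing R]

theorem add_mul_sum_range_neg_one_pow_mul (x y : R) (n : ℕ) :
    (x + y) * ∑ i ∈ range (n + 1), (-1) ^ i * x ^ (n - i) * y ^ i =
      x ^ (n + 1) - (-y) ^ (n + 1) := by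
  have h := geom_sum₂_mul x (-y) (n + 1)
  rw [geom_sum₂_comm, sub_neg_eq_add] at h
  rw [mul_comm, ← h]
  congr 1
  refine sum_congr rfl fun i _ => ?_
  rw [neg_pow, Nat.add_sub_cancel]
  ring

theorem add_mul_mem_span_pow_succ_of_mem {x y z : R} {n : ℕ}
    (hz : z ∈ Ideal.span {x ^ (n + 1), ∑ i ∈ range (n + 1), (-1) ^ i * x ^ (n - i) * y ^ i}) :
    (x + y) * z ∈ Ideal.span {x ^ (n + 1), y ^ (n + 1)} := by
  obtain ⟨a, b, rfl⟩ := Ideal.mem_span_pair.mp hz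
  rw [mul_add, mul_left_comm (x + y) b, add_mul_sum_range_neg_one_pow_mul, neg_pow y]
  exact Ideal.mem_span_pair.mpr ⟨(x + y) * a + b, -(b * (-1) ^ (n + 1)), by ring⟩

theorem pow_mul_pow_succ_notMem_span_of_notMem {x y : R} {n : ℕ}
    (h : x ^ (n + 1) * y ^ (n + 1) ∉ Ideal.span {x ^ (n + 2), y ^ (n + 2)}) :
    x ^ n * y ^ (n + 1) ∉
      Ideal.span {x ^ (n + 2), ∑ i ∈ range (n + 2), (-1) ^ i * x ^ (n + 1 - i) * y ^ i} := by
  intro hz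
  have hy : x ^ n * y ^ (n + 2) ∈ Ideal.span {x ^ (n + 2), y ^ (n + 2)} :=
    Ideal.mul_mem_left _ _ (Ideal.subset_span (by simp))
  refine h ?_
  have := Ideal.sub_mem _ (add_mul_mem_span_pow_succ_of_mem hz) hy
  convert this using 1
  ring

end CommRing

theorem MvPolynomial.X_pow_mul_X_pow_notMem_span {σ R : Type*} [CommSemiring R] [Nontrivial R]
    {i j : σ} (hij : i ≠ j) (n : ℕ) :
    (X i ^ n * X j ^ n : MvPolynomial σ R) ∉ Ideal.span {X i ^ (n + 1), X j ^ (n + 1)} := by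
  classical
  simp only [X_pow_eq_monomial, monomial_mul, one_mul]
  rw [← Set.image_pair (fun s => monomial s (1 : R)), mem_ideal_span_monomial_image]
  intro h
  obtain ⟨s, hs, hle⟩ := h (Finsupp.single i n + Finsupp.single j n) (by simp [support_monomial])
  rcases hs with rfl | rfl
  · simpa [hij] using hle i
  · simpa [hij.symm] using hle j

/-- For n ≥ 1, with Iₙ ⊆ ℤ[X,Y] the ideal generated by X^{n+1} and
Rₙ = ∑_{i=0}^{n} (-1)^{i} X^{n-i} Y^{i}: the monomial X^{n-1} Y^{n} does not
lie in Iₙ (the fundamental class of M is nonzero). -/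
theorem stmt5 (n : ℕ) (hn : 1 ≤ n) :
    (X 0 : MvPolynomial (Fin 2) ℤ) ^ (n - 1) * (X 1) ^ n ∉
      Ideal.span
        ({(X 0) ^ (n + 1),
          ∑ i ∈ Finset.range (n + 1),
            ((-1 : MvPolynomial (Fin 2) ℤ) ^ i * (X 0) ^ (n - i) * (X 1) ^ i)} :
          Set (MvPolynomial (Fin 2) ℤ)) := by
  obtain ⟨m, rfl⟩ := Nat.exists_eq_add_of_le' hn
  exact pow_mul_pow_succ_notMem_span_of_notMem (X_pow_mul_X_pow_notMem_span (by decide) (m + 1))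
end

section
/- Let n ≥ 1 and let Iₙ ⊆ ℤ[X,Y] be the ideal generated by X^{n+1} and Rₙ = ∑_{i=0}^{n} (-1)^{i} X^{n-i} Y^{i}. Then the quotient ring ℤ[X,Y]/Iₙ is a free ℤ-module, and the images of the monomials X^{a} Y^{b} for 0 ≤ a ≤ n and 0 ≤ b ≤ n−1 form a ℤ-basis of it. -/
/-!
Reducing modulo `X^(n+1)` first, `ℤ[X,Y]/Iₙ ≅ A[Y]/(Rₙ)` with `A = ℤ[X]/(X^(n+1))`, which is free
over `ℤ` on `1, X, …, X^n`. Over `A` the relation `Rₙ` is a polynomial in `Y` of degree `n` whose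
leading coefficient `(-1)^n` is a unit, so `A[Y]/(Rₙ)` is free over `A` on `1, Y, …, Y^(n-1)`.
Multiplying the two power bases gives the monomial basis.
-/

open MvPolynomial Finset

namespace Polynomial

variable {A : Type*} [Semiring A] {c : ℕ → A} {n : ℕ}

theorem degree_sum_range_C_mul_X_pow_lt_degree (hc : c n ≠ 0) :
    (∑ i ∈ range n, C (c i) * X ^ i).degree < (C (c n) * X ^ n).degree := by
  rw [degree_C_mul_X_pow n hc]
  simpa only [Fin.sum_univ_eq_sum_range (fun i => C (c i) * X ^ i)] using
    degree_sum_fin_lt (fun i : Fin n => c i)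

theorem leadingCoeff_sum_range_succ_C_mul_X_pow (hc : c n ≠ 0) :
    (∑ i ∈ range (n + 1), C (c i) * X ^ i).leadingCoeff = c n := by
  rw [sum_range_succ, leadingCoeff_add_of_degree_lt (degree_sum_range_C_mul_X_pow_lt_degree hc),
    leadingCoeff_C_mul_X_pow]

theorem natDegree_sum_range_succ_C_mul_X_pow (hc : c n ≠ 0) :
    (∑ i ∈ range (n + 1), C (c i) * X ^ i).natDegree = n := by
  rw [sum_range_succ,
    natDegree_add_eq_right_of_degree_lt (degree_sum_range_C_mul_X_pow_lt_degree hc),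
    natDegree_C_mul_X_pow n _ hc]

end Polynomial

namespace AdjoinRoot

variable {R : Type*} [CommRing R] {g : Polynomial R} {f : Polynomial (AdjoinRoot g)}

noncomputable def basisTower (hg : g.Monic) (hf : f.Monic) :
    Module.Basis (Fin g.natDegree × Fin f.natDegree) R (AdjoinRoot f) :=
  (powerBasis' hg).basis.smulTower (powerBasis' hf).basis

theorem basisTower_apply (hg : g.Monic) (hf : f.Monic) (i : Fin g.natDegree)
    (j : Fin f.natDegree) :
    basisTower hg hf (i, j) = of f (root g ^ (i : ℕ)) * root f ^ (j : ℕ) := by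
  have := (powerBasis' hg).basis.smulTower_apply (powerBasis' hf).basis (i, j)
  rwa [PowerBasis.basis_eq_pow, PowerBasis.basis_eq_pow, powerBasis'_gen, powerBasis'_gen,
    Algebra.smul_def, algebraMap_eq] at this

end AdjoinRoot

namespace MvPolynomial

variable {R : Type*} [CommRing R] (g : Polynomial R)

noncomputable def toPolynomialAdjoinRoot :
    MvPolynomial (Fin 2) R →ₐ[R] Polynomial (AdjoinRoot g) :=
  aeval ![Polynomial.C (AdjoinRoot.root g), Polynomial.X]

@[simp]
theorem toPolynomialAdjoinRoot_X_zero :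
    toPolynomialAdjoinRoot g (X 0) = Polynomial.C (AdjoinRoot.root g) := by
  simp [toPolynomialAdjoinRoot]

@[simp]
theorem toPolynomialAdjoinRoot_X_one : toPolynomialAdjoinRoot g (X 1) = Polynomial.X := by
  simp [toPolynomialAdjoinRoot]

theorem eval₂_toPolynomialAdjoinRoot {T : Type*} [CommRing T] [Algebra R T]
    (φ : AdjoinRoot g →ₐ[R] T) (y : T) (p : MvPolynomial (Fin 2) R) :
    (toPolynomialAdjoinRoot g p).eval₂ φ y = aeval ![φ (AdjoinRoot.root g), y] p := by
  suffices (Polynomial.eval₂RingHom (φ : AdjoinRoot g →+* T) y).comp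
      (toPolynomialAdjoinRoot g).toRingHom = (aeval ![φ (AdjoinRoot.root g), y]).toRingHom from
    congr($this p)
  refine MvPolynomial.ringHom_ext (fun r => ?_) (fun i => ?_)
  · simpa [toPolynomialAdjoinRoot] using φ.commutes r
  · fin_cases i <;> simp

variable {g} {P : MvPolynomial (Fin 2) R} {f : Polynomial (AdjoinRoot g)}

theorem span_le_ker_toPolynomialAdjoinRoot (hfP : f ∣ toPolynomialAdjoinRoot g P) :
    Ideal.span {Polynomial.aeval (X 0) g, P} ≤
      RingHom.ker ((AdjoinRoot.mkₐ f).restrictScalars R |>.comp (toPolynomialAdjoinRoot g)) := by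
  rw [Ideal.span_le, Set.insert_subset_iff, Set.singleton_subset_iff]
  refine ⟨?_, AdjoinRoot.mk_eq_zero.mpr hfP⟩
  simp only [SetLike.mem_coe, RingHom.mem_ker, ← Polynomial.aeval_algHom_apply, AlgHom.coe_comp,
    AlgHom.coe_restrictScalars', AdjoinRoot.coe_mkₐ, Function.comp_apply,
    toPolynomialAdjoinRoot_X_zero, AdjoinRoot.mk_C]
  rw [← AdjoinRoot.algebraMap_eq, Polynomial.aeval_algebraMap_apply, AdjoinRoot.aeval_eq,
    AdjoinRoot.mk_self, map_zero]

variable (g P) in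
theorem aeval_mk_X_eq_mkₐ :
    aeval ![Ideal.Quotient.mk (Ideal.span {Polynomial.aeval (X 0) g, P}) (X 0),
        Ideal.Quotient.mk _ (X 1)] =
      Ideal.Quotient.mkₐ R (Ideal.span {Polynomial.aeval (X 0) g, P}) := by
  ext i
  fin_cases i <;> simp

variable (g P) in
noncomputable def adjoinRootToQuotientInner :
    AdjoinRoot g →ₐ[R] MvPolynomial (Fin 2) R ⧸ Ideal.span {Polynomial.aeval (X 0) g, P} :=
  AdjoinRoot.liftAlgHom g (Algebra.ofId R _) (Ideal.Quotient.mk _ (X 0)) <| by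
    change Polynomial.aeval _ g = 0
    rw [← Ideal.Quotient.mkₐ_eq_mk R, Polynomial.aeval_algHom_apply,
      Ideal.Quotient.mkₐ_eq_mk, Ideal.Quotient.eq_zero_iff_mem]
    exact Ideal.subset_span (Set.mem_insert _ _)

noncomputable def adjoinRootToQuotient (hPf : toPolynomialAdjoinRoot g P ∣ f) :
    AdjoinRoot f →ₐ[R] MvPolynomial (Fin 2) R ⧸ Ideal.span {Polynomial.aeval (X 0) g, P} :=
  AdjoinRoot.liftAlgHom f (adjoinRootToQuotientInner g P) (Ideal.Quotient.mk _ (X 1)) <| by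
    obtain ⟨q, rfl⟩ := hPf
    have hP : Ideal.Quotient.mk (Ideal.span {Polynomial.aeval (X 0) g, P}) P = 0 :=
      Ideal.Quotient.eq_zero_iff_mem.mpr (Ideal.subset_span (Set.mem_insert_of_mem _ rfl))
    rw [Polynomial.eval₂_mul, eval₂_toPolynomialAdjoinRoot, adjoinRootToQuotientInner,
      AdjoinRoot.liftAlgHom_root, aeval_mk_X_eq_mkₐ, Ideal.Quotient.mkₐ_eq_mk, hP, zero_mul]

noncomputable def quotientToAdjoinRoot (hfP : f ∣ toPolynomialAdjoinRoot g P) :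
    (MvPolynomial (Fin 2) R ⧸ Ideal.span {Polynomial.aeval (X 0) g, P}) →ₐ[R] AdjoinRoot f :=
  Ideal.Quotient.liftₐ _ (((AdjoinRoot.mkₐ f).restrictScalars R).comp (toPolynomialAdjoinRoot g))
    fun _ ha => span_le_ker_toPolynomialAdjoinRoot hfP ha

@[simp]
theorem quotientToAdjoinRoot_mk (hfP : f ∣ toPolynomialAdjoinRoot g P)
    (p : MvPolynomial (Fin 2) R) :
    quotientToAdjoinRoot hfP (Ideal.Quotient.mk _ p) =
      AdjoinRoot.mk f (toPolynomialAdjoinRoot g p) :=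
  rfl

noncomputable def quotientAlgEquivAdjoinRoot (hfP : Associated f (toPolynomialAdjoinRoot g P)) :
    (MvPolynomial (Fin 2) R ⧸ Ideal.span {Polynomial.aeval (X 0) g, P}) ≃ₐ[R] AdjoinRoot f :=
  AlgEquiv.ofAlgHom (quotientToAdjoinRoot hfP.dvd) (adjoinRootToQuotient hfP.symm.dvd)
    (by
      refine AdjoinRoot.algHom_ext' (AdjoinRoot.algHom_ext ?_) ?_
      · simp [adjoinRootToQuotient, adjoinRootToQuotientInner]
      · simp [adjoinRootToQuotient])
    (by
      refine Ideal.Quotient.algHom_ext R (MvPolynomial.algHom_ext fun i => ?_)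
      fin_cases i <;> simp [adjoinRootToQuotient, adjoinRootToQuotientInner])

theorem exists_basis_quotient_span_aeval_X_zero (hg : g.Monic)
    (hP : IsUnit (toPolynomialAdjoinRoot g P).leadingCoeff) :
    ∃ B : Module.Basis (Fin g.natDegree × Fin (toPolynomialAdjoinRoot g P).natDegree) R
        (MvPolynomial (Fin 2) R ⧸ Ideal.span {Polynomial.aeval (X 0) g, P}),
      ∀ a b, B (a, b) = Ideal.Quotient.mk _ (X 0 ^ (a : ℕ) * X 1 ^ (b : ℕ)) := by
  set f := Polynomial.C (↑hP.unit⁻¹ : AdjoinRoot g) * toPolynomialAdjoinRoot g P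
  have hf : f.Monic := Polynomial.monic_C_mul_of_mul_leadingCoeff_eq_one (by simp)
  have hdeg : f.natDegree = (toPolynomialAdjoinRoot g P).natDegree :=
    Polynomial.natDegree_C_mul_of_isUnit (Units.isUnit _) _
  have hfP : Associated f (toPolynomialAdjoinRoot g P) :=
    associated_unit_mul_left _ _ (Polynomial.isUnit_C.mpr (Units.isUnit _))
  refine ⟨((AdjoinRoot.basisTower hg hf).reindex (Equiv.prodCongr (.refl _) (finCongr hdeg))).map
    (quotientAlgEquivAdjoinRoot hfP).symm.toLinearEquiv, fun a b => ?_⟩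
  simp [AdjoinRoot.basisTower_apply, quotientAlgEquivAdjoinRoot, adjoinRootToQuotient,
    adjoinRootToQuotientInner]

end MvPolynomial

theorem stmt6_general (n : ℕ) :
    ∃ B : Module.Basis (Fin (n + 1) × Fin n) ℤ
        (MvPolynomial (Fin 2) ℤ ⧸
          Ideal.span
            ({(X 0) ^ (n + 1),
              ∑ i ∈ Finset.range (n + 1),
                ((-1 : MvPolynomial (Fin 2) ℤ) ^ i * (X 0) ^ (n - i) * (X 1) ^ i)} :
              Set (MvPolynomial (Fin 2) ℤ))),
      ∀ (a : Fin (n + 1)) (b : Fin n),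
        B (a, b) =
          Ideal.Quotient.mk _ ((X 0 : MvPolynomial (Fin 2) ℤ) ^ (a : ℕ) * (X 1) ^ (b : ℕ)) := by
  set g : Polynomial ℤ := Polynomial.X ^ (n + 1)
  set P : MvPolynomial (Fin 2) ℤ := ∑ i ∈ range (n + 1), (-1) ^ i * X 0 ^ (n - i) * X 1 ^ i
  have : Nontrivial (AdjoinRoot g) :=
    AdjoinRoot.nontrivial g (by rw [Polynomial.degree_X_pow]; norm_cast)
  set c : ℕ → AdjoinRoot g := fun i => (-1) ^ i * AdjoinRoot.root g ^ (n - i)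
  have hP : toPolynomialAdjoinRoot g P =
      ∑ i ∈ range (n + 1), Polynomial.C (c i) * Polynomial.X ^ i := by
    simp [P, c]
  have hc : IsUnit (c n) := by simpa [c] using isUnit_neg_one.pow n
  have hg : Polynomial.aeval (X 0 : MvPolynomial (Fin 2) ℤ) g = X 0 ^ (n + 1) := by simp [g]
  have key := exists_basis_quotient_span_aeval_X_zero (Polynomial.monic_X_pow (n + 1)) (P := P)
    (by rwa [hP, Polynomial.leadingCoeff_sum_range_succ_C_mul_X_pow hc.ne_zero])
  rwa [hP, Polynomial.natDegree_sum_range_succ_C_mul_X_pow hc.ne_zero, Polynomial.natDegree_X_pow,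
    hg] at key

/-- For n ≥ 1, with Iₙ ⊆ ℤ[X,Y] the ideal generated by X^{n+1} and
Rₙ = ∑_{i=0}^{n} (-1)^{i} X^{n-i} Y^{i}: the quotient ℤ[X,Y]/Iₙ is a free
ℤ-module, and the images of the monomials X^{a} Y^{b} for 0 ≤ a ≤ n and
0 ≤ b ≤ n − 1 form a ℤ-basis of it. -/
theorem stmt6 (n : ℕ) (hn : 1 ≤ n) :
    ∃ B : Module.Basis (Fin (n + 1) × Fin n) ℤ
        (MvPolynomial (Fin 2) ℤ ⧸
          Ideal.span
            ({(X 0) ^ (n + 1),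
              ∑ i ∈ Finset.range (n + 1),
                ((-1 : MvPolynomial (Fin 2) ℤ) ^ i * (X 0) ^ (n - i) * (X 1) ^ i)} :
              Set (MvPolynomial (Fin 2) ℤ))),
      ∀ (a : Fin (n + 1)) (b : Fin n),
        B (a, b) =
          Ideal.Quotient.mk _ ((X 0 : MvPolynomial (Fin 2) ℤ) ^ (a : ℕ) * (X 1) ^ (b : ℕ)) :=
  stmt6_general n
end

section
/- Let n ≥ 2, let Iₙ ⊆ ℤ[X,Y] be the ideal generated by X^{n+1} and Rₙ = ∑_{i=0}^{n} (-1)^{i} X^{n-i} Y^{i}, and for 0 ≤ j ≤ n−1 set C_j = ∑_{i=0}^{j} (−1)^{j−i} X^{n−i} Y^{i}. Fix 1 ≤ p ≤ n−1 and arbitrary integers c₀, …, c_p. Then for every m with 0 ≤ m ≤ p, (∑_{i=0}^{p} c_i X^{i} Y^{p−i}) · C_{n−p−1+m} · X^{n−p−1} − c_m · X^{n−1} Y^{n} ∈ Iₙ. -/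
/-!
Modulo `Iₙ`, write `a = X`, `b = Y`. Both are nilpotent of order `n + 1`: for `b` because
`(a + b) · Rₙ = a ^ (n + 1) ± b ^ (n + 1)`. Multiplying `Rₙ` by `a ^ (n - 1)` leaves only two terms,
so `a ^ n b ^ (n - 1) = a ^ (n - 1) b ^ n`, the top class `ω`. Hence every monomial of degree
`2n - 1` is `ω` or `0`, and the recursion `C_{j+1} = a ^ (n - j - 1) b ^ (j + 1) - C_j` shows that
a monomial `a ^ s b ^ t` with `s + t = n - 1` pairs with `C_j` to `ω` if `j = s` and to `0`
otherwise. In the product only the term `i = m` survives.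
-/

open MvPolynomial Finset

section

variable {R : Type*} [CommRing R]

def conormalClass (n : ℕ) (a b : R) (j : ℕ) : R :=
  ∑ i ∈ range (j + 1), (-1) ^ (j - i) * a ^ (n - i) * b ^ i

theorem conormalClass_zero (n : ℕ) (a b : R) : conormalClass n a b 0 = a ^ n := by
  simp [conormalClass]

theorem conormalClass_succ (n : ℕ) (a b : R) (j : ℕ) :
    conormalClass n a b (j + 1) = a ^ (n - (j + 1)) * b ^ (j + 1) - conormalClass n a b j := by
  have hsign : ∀ i ∈ range (j + 1),
      (-1 : R) ^ (j + 1 - i) * a ^ (n - i) * b ^ i = -((-1) ^ (j - i) * a ^ (n - i) * b ^ i) :=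
    fun i hi => by
      rw [Nat.sub_add_comm (Nat.lt_succ_iff.mp (mem_range.mp hi)), pow_succ]
      ring
  rw [conormalClass, sum_range_succ, sum_congr rfl hsign, sum_neg_distrib, Nat.sub_self,
    conormalClass]
  ring

variable {n : ℕ} {a b : R}

theorem pow_succ_eq_zero_of_alternating_sum_eq_zero (ha : a ^ (n + 1) = 0)
    (hR : ∑ i ∈ range (n + 1), (-1) ^ i * a ^ (n - i) * b ^ i = 0) : b ^ (n + 1) = 0 := by
  have hgeom := geom_sum₂_mul (-b) a (n + 1)
  have hsum : ∑ i ∈ range (n + 1), (-b) ^ i * a ^ (n + 1 - 1 - i) =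
      ∑ i ∈ range (n + 1), (-1) ^ i * a ^ (n - i) * b ^ i :=
    sum_congr rfl fun i _ => by rw [Nat.add_sub_cancel, neg_pow]; ring
  rw [hsum, hR, zero_mul, ha, sub_zero, neg_pow] at hgeom
  exact neg_one_pow_mul_eq_zero_iff.mp hgeom.symm

theorem pow_mul_pow_eq_zero_of_lt (ha : a ^ (n + 1) = 0) (hb : b ^ (n + 1) = 0) {u v : ℕ}
    (huv : n < u ∨ n < v) : a ^ u * b ^ v = 0 := by
  rcases huv with hu | hv
  · rw [pow_eq_zero_of_le hu ha, zero_mul]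
  · rw [pow_eq_zero_of_le hv hb, mul_zero]

theorem pow_mul_pow_pred_eq_pow_pred_mul_pow (ha : a ^ (n + 1) = 0)
    (hR : ∑ i ∈ range (n + 1), (-1) ^ i * a ^ (n - i) * b ^ i = 0) :
    a ^ n * b ^ (n - 1) = a ^ (n - 1) * b ^ n := by
  obtain _ | k := n
  · rfl
  -- multiplying the relation by `a ^ k` kills all of its terms but the last two
  have hlow : a ^ k * ∑ i ∈ range k, (-1) ^ i * a ^ (k + 1 - i) * b ^ i = 0 := by
    rw [mul_sum]
    refine sum_eq_zero fun i hi => ?_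
    have hi : i < k := mem_range.mp hi
    calc a ^ k * ((-1) ^ i * a ^ (k + 1 - i) * b ^ i)
        = (-1) ^ i * (a ^ (k + 1 - i + k) * b ^ i) := by ring
      _ = 0 := by rw [pow_eq_zero_of_le (by omega) ha, zero_mul, mul_zero]
  rw [sum_range_succ, sum_range_succ, Nat.sub_self, Nat.add_sub_cancel_left] at hR
  have := congrArg (a ^ k * ·) hR
  simp only [mul_add, hlow, zero_add, mul_zero] at this
  have hunit : ((-1 : R) ^ k) * (-1) ^ k = 1 := by rw [← mul_pow]; norm_num
  rw [Nat.add_sub_cancel]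
  linear_combination (-1) ^ k * this - (a ^ (k + 1) * b ^ k - a ^ k * b ^ (k + 1)) * hunit

theorem pow_mul_pow_mul_conormalClass (ha : a ^ (n + 1) = 0)
    (hR : ∑ i ∈ range (n + 1), (-1) ^ i * a ^ (n - i) * b ^ i = 0) {s t : ℕ}
    (hst : s + t + 1 = n) (j : ℕ) :
    a ^ s * b ^ t * conormalClass n a b j = if j = s then a ^ (n - 1) * b ^ n else 0 := by
  have hb := pow_succ_eq_zero_of_alternating_sum_eq_zero ha hR
  have hrel := pow_mul_pow_pred_eq_pow_pred_mul_pow ha hR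
  induction j with
  | zero =>
    rw [conormalClass_zero]
    obtain rfl | hs := eq_or_ne s 0
    · obtain rfl : t = n - 1 := by omega
      rw [if_pos rfl, pow_zero, one_mul, mul_comm, hrel]
    · rw [if_neg (Ne.symm hs), mul_right_comm, ← pow_add]
      exact pow_mul_pow_eq_zero_of_lt ha hb (by omega)
  | succ j ih =>
    have hmono : a ^ s * b ^ t * (a ^ (n - (j + 1)) * b ^ (j + 1)) =
        a ^ (s + (n - (j + 1))) * b ^ (t + (j + 1)) := by ring
    rw [conormalClass_succ, mul_sub, ih, hmono]
    rcases lt_trichotomy (j + 1) s with hlt | rfl | hgt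
    · rw [if_neg (by omega), if_neg (by omega), sub_zero]
      exact pow_mul_pow_eq_zero_of_lt ha hb (by omega)
    · rw [if_neg (by omega), if_pos rfl, sub_zero, ← hrel]
      congr 2 <;> omega
    · obtain rfl | hgt := eq_or_lt_of_le (Nat.lt_succ_iff.mp hgt)
      · rw [if_pos rfl, if_neg (by omega), sub_eq_zero]
        congr 2 <;> omega
      · rw [if_neg (by omega), if_neg (by omega), sub_zero]
        exact pow_mul_pow_eq_zero_of_lt ha hb (by omega)

theorem sum_mul_conormalClass_mul_pow (ha : a ^ (n + 1) = 0)
    (hR : ∑ i ∈ range (n + 1), (-1) ^ i * a ^ (n - i) * b ^ i = 0) {p m : ℕ} (hpn : p < n)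
    (hm : m ≤ p) (d : ℕ → R) :
    (∑ i ∈ range (p + 1), d i * a ^ i * b ^ (p - i)) *
        conormalClass n a b (n - p - 1 + m) * a ^ (n - p - 1) =
      d m * a ^ (n - 1) * b ^ n := by
  have hterm : ∀ i ∈ range (p + 1),
      d i * a ^ i * b ^ (p - i) * conormalClass n a b (n - p - 1 + m) * a ^ (n - p - 1) =
        if i = m then d i * (a ^ (n - 1) * b ^ n) else 0 := fun i hi => by
    have hip : i ≤ p := Nat.lt_succ_iff.mp (mem_range.mp hi)
    calc d i * a ^ i * b ^ (p - i) * conormalClass n a b (n - p - 1 + m) * a ^ (n - p - 1)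
        = d i * (a ^ (i + (n - p - 1)) * b ^ (p - i) * conormalClass n a b (n - p - 1 + m)) := by
          ring
      _ = if i = m then d i * (a ^ (n - 1) * b ^ n) else 0 := by
          have hiff : n - p - 1 + m = i + (n - p - 1) ↔ i = m := by omega
          rw [pow_mul_pow_mul_conormalClass ha hR (by omega), mul_ite, mul_zero]
          exact if_congr hiff rfl rfl
  rw [sum_mul, sum_mul, sum_congr rfl hterm, sum_ite_eq', if_pos (by simpa using hm), mul_assoc]

end

theorem stmt9_general (n p m : ℕ) (hn : 2 ≤ n) (hp2 : p ≤ n - 1)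
    (hm : m ≤ p) (c : ℕ → ℤ) :
    (∑ i ∈ Finset.range (p + 1),
        (MvPolynomial.C (c i) * (X 0) ^ i * (X 1) ^ (p - i))) *
          (∑ i ∈ Finset.range (n - p - 1 + m + 1),
            ((-1 : MvPolynomial (Fin 2) ℤ) ^ (n - p - 1 + m - i) *
              (X 0) ^ (n - i) * (X 1) ^ i)) *
          (X 0) ^ (n - p - 1) -
        MvPolynomial.C (c m) * (X 0) ^ (n - 1) * (X 1) ^ n ∈
      Ideal.span
        ({(X 0) ^ (n + 1),
          ∑ i ∈ Finset.range (n + 1),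
            ((-1 : MvPolynomial (Fin 2) ℤ) ^ i * (X 0) ^ (n - i) * (X 1) ^ i)} :
          Set (MvPolynomial (Fin 2) ℤ)) := by
  set I := Ideal.span ({(X 0) ^ (n + 1), ∑ i ∈ Finset.range (n + 1),
    ((-1 : MvPolynomial (Fin 2) ℤ) ^ i * (X 0) ^ (n - i) * (X 1) ^ i)} :
      Set (MvPolynomial (Fin 2) ℤ))
  set π := Ideal.Quotient.mk I
  have ha : π (X 0) ^ (n + 1) = 0 := by
    rw [← map_pow, Ideal.Quotient.eq_zero_iff_mem]
    exact Ideal.subset_span (Set.mem_insert _ _)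
  have hR : ∑ i ∈ range (n + 1), (-1) ^ i * π (X 0) ^ (n - i) * π (X 1) ^ i = 0 := by
    have h : π (∑ i ∈ range (n + 1), (-1) ^ i * X 0 ^ (n - i) * X 1 ^ i) = 0 :=
      Ideal.Quotient.eq_zero_iff_mem.mpr (Ideal.subset_span (Set.mem_insert_of_mem _ rfl))
    simpa only [map_sum, map_mul, map_pow, map_neg, map_one] using h
  rw [← Ideal.Quotient.eq]
  simpa only [conormalClass, map_sum, map_mul, map_pow, map_neg, map_one] using
    sum_mul_conormalClass_mul_pow ha hR (by omega) hm fun i => π (C (c i))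

/-- Lemma 1.2 computation: for n ≥ 2, Iₙ = (X^{n+1}, Rₙ) ⊆ ℤ[X,Y],
C_j = ∑_{i=0}^{j} (−1)^{j−i} X^{n−i} Y^{i}, 1 ≤ p ≤ n−1, integers c₀,…,c_p, and
0 ≤ m ≤ p:
(∑_{i=0}^{p} c_i X^{i} Y^{p−i}) · C_{n−p−1+m} · X^{n−p−1} − c_m · X^{n−1} Y^{n} ∈ Iₙ. -/
theorem stmt9 (n p m : ℕ) (hn : 2 ≤ n) (hp1 : 1 ≤ p) (hp2 : p ≤ n - 1)
    (hm : m ≤ p) (c : ℕ → ℤ) :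
    (∑ i ∈ Finset.range (p + 1),
        (MvPolynomial.C (c i) * (X 0) ^ i * (X 1) ^ (p - i))) *
          (∑ i ∈ Finset.range (n - p - 1 + m + 1),
            ((-1 : MvPolynomial (Fin 2) ℤ) ^ (n - p - 1 + m - i) *
              (X 0) ^ (n - i) * (X 1) ^ i)) *
          (X 0) ^ (n - p - 1) -
        MvPolynomial.C (c m) * (X 0) ^ (n - 1) * (X 1) ^ n ∈
      Ideal.span
        ({(X 0) ^ (n + 1),
          ∑ i ∈ Finset.range (n + 1),
            ((-1 : MvPolynomial (Fin 2) ℤ) ^ i * (X 0) ^ (n - i) * (X 1) ^ i)} :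
          Set (MvPolynomial (Fin 2) ℤ)) :=
  stmt9_general n p m hn hp2 hm c
end

section
/- Let n ≥ 2 and let Iₙ ⊆ ℤ[X,Y] be the ideal generated by X^{n+1} and Rₙ = ∑_{i=0}^{n} (-1)^{i} X^{n-i} Y^{i}. Fix integers 1 ≤ s ≤ p ≤ n−1 and arbitrary integers d₀, …, d_p. Then (∑_{i=0}^{p} d_i X^{i} Y^{p−i}) · Y^{n−p+s−1} · X^{n−s} − (d_s + d_{s−1}) · X^{n−1} Y^{n} ∈ Iₙ. -/
/-!
Work in the quotient ring, where `x ^ (n + 1) = 0` and `Rₙ(x, y) = 0`. Since `Rₙ(x, y)` is the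
geometric sum of `x` and `-y`, multiplying it by `x + y` gives `y ^ (n + 1) = 0` as well, and
multiplying it by `x ^ (n - 1)` kills every term except the last two, giving
`x ^ n * y ^ (n - 1) = x ^ (n - 1) * y ^ n`. The product in the theorem is homogeneous of degree
`2n - 1`, so its only monomials that survive are these two, coming from the indices `s` and `s - 1`.
-/

open MvPolynomial Finset

section CommRing

variable {B : Type*} [CommRing B] {x y : B} {n : ℕ}

/-- The relation `Rₙ` of the presentation of `H*(ℙ(T*ℙⁿ))`. -/
def alternatingPowSum (n : ℕ) (x y : B) : B :=
  ∑ i ∈ range (n + 1), (-1) ^ i * x ^ (n - i) * y ^ i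

theorem alternatingPowSum_mul_add (n : ℕ) (x y : B) :
    alternatingPowSum n x y * (x + y) = x ^ (n + 1) - (-y) ^ (n + 1) := by
  have hgeom :
      alternatingPowSum n x y = ∑ i ∈ range (n + 1), (-y) ^ i * x ^ (n + 1 - 1 - i) := by
    refine sum_congr rfl fun i _ => ?_
    rw [neg_pow, Nat.add_sub_cancel]
    ring
  rw [hgeom, geom_sum₂_comm, ← geom_sum₂_mul, sub_neg_eq_add]

theorem pow_succ_eq_zero_of_alternatingPowSum_eq_zero (hx : x ^ (n + 1) = 0)
    (hR : alternatingPowSum n x y = 0) : y ^ (n + 1) = 0 := by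
  have h := alternatingPowSum_mul_add n x y
  rwa [hR, hx, zero_mul, zero_sub, eq_comm, neg_eq_zero, neg_pow,
    (isUnit_neg_one.pow _).mul_right_eq_zero] at h

theorem pow_mul_pow_pred_eq_of_alternatingPowSum_eq_zero (hx : x ^ (n + 1) = 0)
    (hR : alternatingPowSum n x y = 0) : x ^ n * y ^ (n - 1) = x ^ (n - 1) * y ^ n := by
  cases n with
  | zero => rfl
  | succ m =>
    -- in `x ^ m * Rₙ` every term but the last two has `x`-degree at least `m + 2`
    have hhigh : ∑ i ∈ range m, x ^ m * ((-1) ^ i * x ^ (m + 1 - i) * y ^ i) = 0 := by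
      refine sum_eq_zero fun i hi => ?_
      have hi : i < m := mem_range.mp hi
      rw [show x ^ m * ((-1) ^ i * x ^ (m + 1 - i) * y ^ i)
          = (-1) ^ i * y ^ i * x ^ (m - 1 - i) * x ^ (m + 1 + 1) by
        rw [mul_assoc ((-1) ^ i * y ^ i), ← pow_add,
          show m - 1 - i + (m + 1 + 1) = m + (m + 1 - i) by omega]
        ring,
        hx, mul_zero]
    have hlast : x ^ m * alternatingPowSum (m + 1) x y
        = (-1) ^ m * (x ^ (m + 1) * y ^ m - x ^ m * y ^ (m + 1)) := by
      rw [alternatingPowSum, mul_sum, sum_range_succ, sum_range_succ, hhigh,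
        show m + 1 - m = 1 by omega, Nat.sub_self]
      ring
    rw [Nat.add_sub_cancel]
    rwa [hR, mul_zero, eq_comm, (isUnit_neg_one.pow m).mul_right_eq_zero, sub_eq_zero] at hlast

theorem pow_mul_pow_eq_zero_of_add_eq (hx : x ^ (n + 1) = 0) (hy : y ^ (n + 1) = 0) {a b : ℕ}
    (hab : a + b + 1 = 2 * n) (ha : a ≠ n - 1) (ha' : a ≠ n) : x ^ a * y ^ b = 0 := by
  rcases le_or_gt (n + 1) a with hna | hna
  · rw [pow_eq_zero_of_le hna hx, zero_mul]
  · rw [pow_eq_zero_of_le (by omega : n + 1 ≤ b) hy, mul_zero]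

theorem sum_mul_pow_mul_pow_eq (hx : x ^ (n + 1) = 0) (hy : y ^ (n + 1) = 0)
    (hxy : x ^ n * y ^ (n - 1) = x ^ (n - 1) * y ^ n) (c : ℕ → B) {p s : ℕ} (hs1 : 1 ≤ s)
    (hs2 : s ≤ p) (hp : p ≤ n) :
    (∑ i ∈ range (p + 1), c i * x ^ i * y ^ (p - i)) * y ^ (n - p + s - 1) * x ^ (n - s)
      = (c s + c (s - 1)) * x ^ (n - 1) * y ^ n := by
  have hterm : ∀ i ≤ p, c i * x ^ i * y ^ (p - i) * y ^ (n - p + s - 1) * x ^ (n - s)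
      = c i * (x ^ (i + n - s) * y ^ (n + s - 1 - i)) := by
    intro i hi
    rw [show i + n - s = i + (n - s) by omega,
      show n + s - 1 - i = p - i + (n - p + s - 1) by omega]
    ring
  rw [sum_mul, sum_mul, sum_eq_add_of_mem s (s - 1) (mem_range.mpr (by omega))
    (mem_range.mpr (by omega)) (by omega)]
  · rw [hterm s hs2, hterm (s - 1) (by omega), show s + n - s = n by omega,
      show n + s - 1 - s = n - 1 by omega, show s - 1 + n - s = n - 1 by omega,
      show n + s - 1 - (s - 1) = n by omega, hxy]
    ring
  · intro i hi hne
    have hi : i ≤ p := Nat.lt_succ_iff.mp (mem_range.mp hi)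
    rw [hterm i hi, pow_mul_pow_eq_zero_of_add_eq hx hy (by omega) (by omega) (by omega), mul_zero]

theorem map_alternatingPowSum {A : Type*} [CommRing A] (f : A →+* B) (n : ℕ) (x y : A) :
    f (alternatingPowSum n x y) = alternatingPowSum n (f x) (f y) := by
  simp only [alternatingPowSum, map_sum, map_mul, map_pow, map_neg, map_one]

theorem sub_mem_span_pow_alternatingPowSum (x y : B) (c : ℕ → B) {p s : ℕ} (hs1 : 1 ≤ s)
    (hs2 : s ≤ p) (hp : p ≤ n) :
    (∑ i ∈ range (p + 1), c i * x ^ i * y ^ (p - i)) * y ^ (n - p + s - 1) * x ^ (n - s)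
        - (c s + c (s - 1)) * x ^ (n - 1) * y ^ n
      ∈ Ideal.span {x ^ (n + 1), alternatingPowSum n x y} := by
  set I := Ideal.span {x ^ (n + 1), alternatingPowSum n x y}
  have hx : Ideal.Quotient.mk I x ^ (n + 1) = 0 := by
    rw [← map_pow, Ideal.Quotient.eq_zero_iff_mem]
    exact Ideal.subset_span (Set.mem_insert _ _)
  have hR : alternatingPowSum n (Ideal.Quotient.mk I x) (Ideal.Quotient.mk I y) = 0 := by
    rw [← map_alternatingPowSum, Ideal.Quotient.eq_zero_iff_mem]
    exact Ideal.subset_span (Set.mem_insert_of_mem _ rfl)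
  rw [← Ideal.Quotient.eq]
  simp only [map_sum, map_mul, map_pow, map_add]
  exact sum_mul_pow_mul_pow_eq hx (pow_succ_eq_zero_of_alternatingPowSum_eq_zero hx hR)
    (pow_mul_pow_pred_eq_of_alternatingPowSum_eq_zero hx hR) _ hs1 hs2 hp

end CommRing

theorem stmt11_general (n p s : ℕ) (hs1 : 1 ≤ s) (hs2 : s ≤ p)
    (hp : p ≤ n - 1) (d : ℕ → ℤ) :
    (∑ i ∈ Finset.range (p + 1),
        (MvPolynomial.C (d i) * (X 0) ^ i * (X 1) ^ (p - i))) *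
          (X 1) ^ (n - p + s - 1) * (X 0) ^ (n - s) -
        MvPolynomial.C (d s + d (s - 1)) * (X 0) ^ (n - 1) * (X 1) ^ n ∈
      Ideal.span
        ({(X 0) ^ (n + 1),
          ∑ i ∈ Finset.range (n + 1),
            ((-1 : MvPolynomial (Fin 2) ℤ) ^ i * (X 0) ^ (n - i) * (X 1) ^ i)} :
          Set (MvPolynomial (Fin 2) ℤ)) := by
  rw [map_add]
  exact sub_mem_span_pow_alternatingPowSum (X 0) (X 1) (fun i => C (d i)) hs1 hs2 (by omega)

/-- Proposition 2.1 (second half) computation: for n ≥ 2, Iₙ = (X^{n+1}, Rₙ) ⊆ ℤ[X,Y],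
1 ≤ s ≤ p ≤ n−1 and integers d₀,…,d_p:
(∑_{i=0}^{p} d_i X^{i} Y^{p−i}) · Y^{n−p+s−1} · X^{n−s}
 − (d_s + d_{s−1}) · X^{n−1} Y^{n} ∈ Iₙ. -/
theorem stmt11 (n p s : ℕ) (hn : 2 ≤ n) (hs1 : 1 ≤ s) (hs2 : s ≤ p)
    (hp : p ≤ n - 1) (d : ℕ → ℤ) :
    (∑ i ∈ Finset.range (p + 1),
        (MvPolynomial.C (d i) * (X 0) ^ i * (X 1) ^ (p - i))) *
          (X 1) ^ (n - p + s - 1) * (X 0) ^ (n - s) -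
        MvPolynomial.C (d s + d (s - 1)) * (X 0) ^ (n - 1) * (X 1) ^ n ∈
      Ideal.span
        ({(X 0) ^ (n + 1),
          ∑ i ∈ Finset.range (n + 1),
            ((-1 : MvPolynomial (Fin 2) ℤ) ^ i * (X 0) ^ (n - i) * (X 1) ^ i)} :
          Set (MvPolynomial (Fin 2) ℤ)) :=
  stmt11_general n p s hs1 hs2 hp d
end
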